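/- Let U = u₁ ⊗ ⋯ ⊗ u_n be a tensor product of independent single-qubit 2-design gates and P an n-qubit Pauli string. Then for any operator B, E_U[Tr(P U B U†)²] = 3^{−|P|} · Σ_{Q: supp(Q) = supp(P)} Tr(Q B)², where the sum ranges over Pauli strings Q with the same support as P and |P| is the number of non-identity tensor factors of P. -/

import Mathlib

open Matrix MeasureTheory

instance matrixMeasurableSpace {m n : Type*} [MeasurableSpace ℂ] :
    MeasurableSpace (Matrix m n ℂ) :=
  MeasurableSpace.pi

/-- The single-qubit Pauli matrices `I, X, Y, Z`. -/
noncomputable def pauli : Fin 4 → Matrix (Fin 2) (Fin 2) ℂ :=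
  ![1, !![0, 1; 1, 0], !![0, -Complex.I; Complex.I, 0], !![1, 0; 0, -1]]

/-- The `n`-qubit Pauli string indexed by `s : Fin n → Fin 4`. -/
noncomputable def pauliString {n : ℕ} (s : Fin n → Fin 4) :
    Matrix (Fin n → Fin 2) (Fin n → Fin 2) ℂ :=
  Matrix.of fun x y => ∏ i, pauli (s i) (x i) (y i)

/-- The support of a Pauli string: the qubits on which it acts non-trivially. -/
def pauliSupp {n : ℕ} (s : Fin n → Fin 4) : Finset (Fin n) :=
  Finset.univ.filter fun i => s i ≠ 0

/-- The tensor product `u₁ ⊗ ⋯ ⊗ u_n` of single-qubit operators. -/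
noncomputable def tensorLayer {n : ℕ} (u : Fin n → Matrix (Fin 2) (Fin 2) ℂ) :
    Matrix (Fin n → Fin 2) (Fin n → Fin 2) ℂ :=
  Matrix.of fun x y => ∏ i, u i (x i) (y i)

open scoped ComplexConjugate

abbrev UG := Matrix.unitaryGroup (Fin 2) ℂ

-- entry measurability
lemma measurable_entry (i j : Fin 2) : Measurable (fun u : UG => (u : Matrix (Fin 2) (Fin 2) ℂ) i j) :=
  (measurable_pi_apply j).comp ((measurable_pi_apply i).comp measurable_subtype_coe)

lemma measurable_entry_conj (i j : Fin 2) :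
    Measurable (fun u : UG => conj ((u : Matrix (Fin 2) (Fin 2) ℂ) i j)) :=
  Complex.continuous_conj.measurable.comp (measurable_entry i j)

-- entry bound
lemma entry_bound (u : UG) (i j : Fin 2) : ‖(u : Matrix (Fin 2) (Fin 2) ℂ) i j‖ ≤ 1 := by
  have h : ((u : Matrix (Fin 2) (Fin 2) ℂ) * star (u : Matrix (Fin 2) (Fin 2) ℂ)) i i = 1 := by
    rw [Matrix.mem_unitaryGroup_iff.mp u.2]
    simp
  rw [Matrix.mul_apply] at h
  simp only [Matrix.star_apply, RCLike.star_def] at h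
  have h2 : ∑ k, Complex.normSq ((u : Matrix (Fin 2) (Fin 2) ℂ) i k) = 1 := by
    have := congrArg Complex.re h
    simpa [Complex.mul_conj] using this
  have h3 : Complex.normSq ((u : Matrix (Fin 2) (Fin 2) ℂ) i j) ≤ 1 := by
    rw [← h2]
    exact Finset.single_le_sum (f := fun k => Complex.normSq ((u : Matrix (Fin 2) (Fin 2) ℂ) i k))
      (fun k _ => Complex.normSq_nonneg _) (Finset.mem_univ j)
  have := Complex.normSq_eq_norm_sq ((u : Matrix (Fin 2) (Fin 2) ℂ) i j)
  rw [this] at h3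
  nlinarith [norm_nonneg ((u : Matrix (Fin 2) (Fin 2) ℂ) i j)]

lemma integrable_aux {X : Type*} [MeasurableSpace X] {μ : Measure X} [IsProbabilityMeasure μ]
    {f : X → ℂ} (hm : Measurable f) {C : ℝ} (hb : ∀ u, ‖f u‖ ≤ C) : Integrable f μ := by
  refine ⟨hm.aestronglyMeasurable, ?_⟩
  exact MeasureTheory.HasFiniteIntegral.of_bounded (C := C) (Filter.Eventually.of_forall hb)

-- appended part (test with a.lean prefix)
noncomputable def Mfun (p : Fin 4) (u : Matrix (Fin 2) (Fin 2) ℂ) (z w : Fin 2) : ℂ :=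
  ∑ x, ∑ y, pauli p x y * u y z * conj (u x w)

lemma pauli_entry_bound (p : Fin 4) (x y : Fin 2) : ‖pauli p x y‖ ≤ 1 := by
  fin_cases p <;> fin_cases x <;> fin_cases y <;>
    simp [pauli, Matrix.one_apply]

lemma Mfun_bound (p : Fin 4) (u : UG) (z w : Fin 2) :
    ‖Mfun p (u : Matrix (Fin 2) (Fin 2) ℂ) z w‖ ≤ 4 := by
  unfold Mfun
  have hone : ∀ x y : Fin 2, ‖pauli p x y * (u : Matrix (Fin 2) (Fin 2) ℂ) y z *
      conj ((u : Matrix (Fin 2) (Fin 2) ℂ) x w)‖ ≤ 1 := by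
    intro x y
    rw [norm_mul, norm_mul]
    have h1 := pauli_entry_bound p x y
    have h2 := entry_bound u y z
    have h3 : ‖conj ((u : Matrix (Fin 2) (Fin 2) ℂ) x w)‖ ≤ 1 := by
      rw [RCLike.norm_conj]; exact entry_bound u x w
    exact mul_le_one₀ (mul_le_one₀ h1 (norm_nonneg _) h2) (norm_nonneg _) h3
  calc ‖∑ x, ∑ y, pauli p x y * (u : Matrix (Fin 2) (Fin 2) ℂ) y z *
      conj ((u : Matrix (Fin 2) (Fin 2) ℂ) x w)‖
      ≤ ∑ x : Fin 2, ‖∑ y, pauli p x y * (u : Matrix (Fin 2) (Fin 2) ℂ) y z *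
        conj ((u : Matrix (Fin 2) (Fin 2) ℂ) x w)‖ := norm_sum_le _ _
    _ ≤ ∑ x : Fin 2, ∑ y : Fin 2, ‖pauli p x y * (u : Matrix (Fin 2) (Fin 2) ℂ) y z *
        conj ((u : Matrix (Fin 2) (Fin 2) ℂ) x w)‖ :=
        Finset.sum_le_sum (fun x _ => norm_sum_le _ _)
    _ ≤ ∑ _x : Fin 2, ∑ _y : Fin 2, (1:ℝ) :=
        Finset.sum_le_sum (fun x _ => Finset.sum_le_sum (fun y _ => hone x y))
    _ = 4 := by norm_num

lemma measurable_Mfun (p : Fin 4) (z w : Fin 2) :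
    Measurable (fun u : UG => Mfun p (u : Matrix (Fin 2) (Fin 2) ℂ) z w) := by
  unfold Mfun
  refine Finset.measurable_sum _ (fun x _ => Finset.measurable_sum _ (fun y _ => ?_))
  exact (measurable_const.mul (measurable_entry y z)).mul (measurable_entry_conj x w)

noncomputable def ker (μ : Measure UG) (p : Fin 4) (z w z' w' : Fin 2) : ℂ :=
  ∫ u : UG, Mfun p (u : Matrix (Fin 2) (Fin 2) ℂ) z w *
    Mfun p (u : Matrix (Fin 2) (Fin 2) ℂ) z' w' ∂μ

lemma integrable_kerterm (μ : Measure UG) [IsProbabilityMeasure μ] (p : Fin 4) (z w z' w' : Fin 2) :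
    Integrable (fun u : UG => Mfun p (u : Matrix (Fin 2) (Fin 2) ℂ) z w *
      Mfun p (u : Matrix (Fin 2) (Fin 2) ℂ) z' w') μ := by
  refine integrable_aux ((measurable_Mfun p z w).mul (measurable_Mfun p z' w')) (C := 16) ?_
  intro u
  rw [norm_mul]
  have h1 := Mfun_bound p u z w
  have h2 := Mfun_bound p u z' w'
  nlinarith [norm_nonneg (Mfun p (u : Matrix (Fin 2) (Fin 2) ℂ) z w),
    norm_nonneg (Mfun p (u : Matrix (Fin 2) (Fin 2) ℂ) z' w')]

lemma integral_right_inv {μ : Measure UG} (V : UG)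
    (h : MeasurePreserving (fun u : UG => u * V) μ μ) {f : UG → ℂ}
    (hf : Measurable f) : ∫ u, f u ∂μ = ∫ u, f (u * V) ∂μ := by
  conv_lhs => rw [← h.map_eq]
  exact integral_map h.measurable.aemeasurable hf.aestronglyMeasurable

lemma Mfun_mul (p : Fin 4) (u V : Matrix (Fin 2) (Fin 2) ℂ) (z w : Fin 2) :
    Mfun p (u * V) z w = ∑ c, ∑ d, V c z * conj (V d w) * Mfun p u c d := by
  simp only [Mfun, Matrix.mul_apply, Fin.sum_univ_two, map_add, _root_.map_mul]
  ring

lemma ker_inv {μ : Measure UG} [IsProbabilityMeasure μ] (p : Fin 4) (V : UG)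
    (h : MeasurePreserving (fun u : UG => u * V) μ μ) (z w z' w' : Fin 2) :
    ker μ p z w z' w' = ∑ c, ∑ d, ∑ c', ∑ d',
      ((V : Matrix (Fin 2) (Fin 2) ℂ) c z * conj ((V : Matrix (Fin 2) (Fin 2) ℂ) d w) *
       ((V : Matrix (Fin 2) (Fin 2) ℂ) c' z' * conj ((V : Matrix (Fin 2) (Fin 2) ℂ) d' w'))) *
      ker μ p c d c' d' := by
  have hmeas : Measurable (fun u : UG => Mfun p (u : Matrix (Fin 2) (Fin 2) ℂ) z w *
      Mfun p (u : Matrix (Fin 2) (Fin 2) ℂ) z' w') :=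
    (measurable_Mfun p z w).mul (measurable_Mfun p z' w')
  have step1 : ker μ p z w z' w' = ∫ u : UG,
      Mfun p ((u * V : UG) : Matrix (Fin 2) (Fin 2) ℂ) z w *
      Mfun p ((u * V : UG) : Matrix (Fin 2) (Fin 2) ℂ) z' w' ∂μ :=
    integral_right_inv V h hmeas
  rw [step1]
  have step2 : ∀ u : UG, Mfun p ((u * V : UG) : Matrix (Fin 2) (Fin 2) ℂ) z w *
      Mfun p ((u * V : UG) : Matrix (Fin 2) (Fin 2) ℂ) z' w' =
      ∑ c, ∑ d, ∑ c', ∑ d',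
      ((V : Matrix (Fin 2) (Fin 2) ℂ) c z * conj ((V : Matrix (Fin 2) (Fin 2) ℂ) d w) *
       ((V : Matrix (Fin 2) (Fin 2) ℂ) c' z' * conj ((V : Matrix (Fin 2) (Fin 2) ℂ) d' w'))) *
      (Mfun p (u : Matrix (Fin 2) (Fin 2) ℂ) c d * Mfun p (u : Matrix (Fin 2) (Fin 2) ℂ) c' d') := by
    intro u
    have : ((u * V : UG) : Matrix (Fin 2) (Fin 2) ℂ) =
        (u : Matrix (Fin 2) (Fin 2) ℂ) * (V : Matrix (Fin 2) (Fin 2) ℂ) := rfl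
    rw [this, Mfun_mul, Mfun_mul]
    simp only [Fin.sum_univ_two]
    ring
  simp only [step2]
  rw [integral_finset_sum]
  · refine Finset.sum_congr rfl (fun c _ => ?_)
    rw [integral_finset_sum]
    · refine Finset.sum_congr rfl (fun d _ => ?_)
      rw [integral_finset_sum]
      · refine Finset.sum_congr rfl (fun c' _ => ?_)
        rw [integral_finset_sum]
        · exact Finset.sum_congr rfl (fun d' _ => integral_const_mul _ _)
        · exact fun d' _ => ((integrable_kerterm μ p c d c' d').const_mul _)
      · exact fun c' _ => integrable_finset_sum _
          (fun d' _ => ((integrable_kerterm μ p c d c' d').const_mul _))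
    · exact fun d _ => integrable_finset_sum _ (fun c' _ => integrable_finset_sum _
        (fun d' _ => ((integrable_kerterm μ p c d c' d').const_mul _)))
  · exact fun c _ => integrable_finset_sum _ (fun d _ => integrable_finset_sum _
      (fun c' _ => integrable_finset_sum _
        (fun d' _ => ((integrable_kerterm μ p c d c' d').const_mul _))))

abbrev M2 := Matrix (Fin 2) (Fin 2) ℂ

lemma sum_diag_eq (p : Fin 4) (a : M2) (hunit : a * star a = 1) :
    ∑ z, Mfun p a z z = pauli p 0 0 + pauli p 1 1 := by
  have e : ∀ y x : Fin 2, a y 0 * (starRingEnd ℂ) (a x 0) + a y 1 * (starRingEnd ℂ) (a x 1)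
      = if y = x then 1 else 0 := by
    intro y x
    have h2 : (a * star a) y x = (1 : M2) y x := by rw [hunit]
    simpa [Matrix.mul_apply, Fin.sum_univ_two, Matrix.star_apply, Matrix.one_apply] using h2
  have e00 : a 0 0 * (starRingEnd ℂ) (a 0 0) + a 0 1 * (starRingEnd ℂ) (a 0 1) = 1 := by simpa using e 0 0
  have e01 : a 0 0 * (starRingEnd ℂ) (a 1 0) + a 0 1 * (starRingEnd ℂ) (a 1 1) = 0 := by simpa using e 0 1
  have e10 : a 1 0 * (starRingEnd ℂ) (a 0 0) + a 1 1 * (starRingEnd ℂ) (a 0 1) = 0 := by simpa using e 1 0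
  have e11 : a 1 0 * (starRingEnd ℂ) (a 1 0) + a 1 1 * (starRingEnd ℂ) (a 1 1) = 1 := by simpa using e 1 1
  simp only [Mfun, Fin.sum_univ_two]
  linear_combination pauli p 0 0 * e00 + pauli p 0 1 * e10 + pauli p 1 0 * e01 + pauli p 1 1 * e11

lemma sum_cross_eq (p : Fin 4) (a : M2) (hunit : a * star a = 1) :
    ∑ z, ∑ z', Mfun p a z z' * Mfun p a z' z =
      pauli p 0 0 * pauli p 0 0 + pauli p 0 1 * pauli p 1 0 +
      pauli p 1 0 * pauli p 0 1 + pauli p 1 1 * pauli p 1 1 := by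
  have e : ∀ y x : Fin 2, a y 0 * (starRingEnd ℂ) (a x 0) + a y 1 * (starRingEnd ℂ) (a x 1)
      = if y = x then 1 else 0 := by
    intro y x
    have h2 : (a * star a) y x = (1 : M2) y x := by rw [hunit]
    simpa [Matrix.mul_apply, Fin.sum_univ_two, Matrix.star_apply, Matrix.one_apply] using h2
  have e00 : a 0 0 * (starRingEnd ℂ) (a 0 0) + a 0 1 * (starRingEnd ℂ) (a 0 1) = 1 := by simpa using e 0 0
  have e01 : a 0 0 * (starRingEnd ℂ) (a 1 0) + a 0 1 * (starRingEnd ℂ) (a 1 1) = 0 := by simpa using e 0 1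
  have e10 : a 1 0 * (starRingEnd ℂ) (a 0 0) + a 1 1 * (starRingEnd ℂ) (a 0 1) = 0 := by simpa using e 1 0
  have e11 : a 1 0 * (starRingEnd ℂ) (a 1 0) + a 1 1 * (starRingEnd ℂ) (a 1 1) = 1 := by simpa using e 1 1
  simp only [Mfun, Fin.sum_univ_two]
  linear_combination pauli p 0 0 * pauli p 0 0 * (a 0 0 * (starRingEnd ℂ) (a 0 0) + a 0 1 * (starRingEnd ℂ) (a 0 1)) * e00 + pauli p 0 0 * pauli p 0 0 * e00 + pauli p 0 0 * pauli p 0 1 * (a 1 0 * (starRingEnd ℂ) (a 0 0) + a 1 1 * (starRingEnd ℂ) (a 0 1)) * e00 + pauli p 0 0 * pauli p 0 1 * e10 + pauli p 0 0 * pauli p 1 0 * (a 0 0 * (starRingEnd ℂ) (a 0 0) + a 0 1 * (starRingEnd ℂ) (a 0 1)) * e01 + pauli p 0 0 * pauli p 1 1 * (a 1 0 * (starRingEnd ℂ) (a 0 0) + a 1 1 * (starRingEnd ℂ) (a 0 1)) * e01 + pauli p 0 1 * pauli p 0 0 * (a 0 0 * (starRingEnd ℂ) (a 0 0) + a 0 1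 * (starRingEnd ℂ) (a 0 1)) * e10 + pauli p 0 1 * pauli p 0 1 * (a 1 0 * (starRingEnd ℂ) (a 0 0) + a 1 1 * (starRingEnd ℂ) (a 0 1)) * e10 + pauli p 0 1 * pauli p 1 0 * (a 0 0 * (starRingEnd ℂ) (a 0 0) + a 0 1 * (starRingEnd ℂ) (a 0 1)) * e11 + pauli p 0 1 * pauli p 1 0 * e00 + pauli p 0 1 * pauli p 1 1 * (a 1 0 * (starRingEnd ℂ) (a 0 0) + a 1 1 * (starRingEnd ℂ) (a 0 1)) * e11 + pauli p 0 1 * pauli p 1 1 * e10 + pauli p 1 0 * pauli p 0 0 * (a 0 0 * (starRingEnd ℂ) (a 1 0) + a 0 1 * (starRingEnd ℂ) (a 1 1)) * e00 + pauli p 1 0 * pauli p 0 0 * e01 + pauli p 1 0 * pauli p 0 1 * (a 1 0 * (starRingEnd ℂ) (a 1 0) + a 1 1 * (starRingEnd ℂ) (a 1 1)) * e00 + pauli p 1 0 * pauli p 0 1 * e11 + pauli p 1 0 * pauli p 1 0 * (a 0 0 * (starRingEnd ℂ) (a 1 0) + a 0 1 * (starRingEnd ℂ) (a 1 1)) * e01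 + pauli p 1 0 * pauli p 1 1 * (a 1 0 * (starRingEnd ℂ) (a 1 0) + a 1 1 * (starRingEnd ℂ) (a 1 1)) * e01 + pauli p 1 1 * pauli p 0 0 * (a 0 0 * (starRingEnd ℂ) (a 1 0) + a 0 1 * (starRingEnd ℂ) (a 1 1)) * e10 + pauli p 1 1 * pauli p 0 1 * (a 1 0 * (starRingEnd ℂ) (a 1 0) + a 1 1 * (starRingEnd ℂ) (a 1 1)) * e10 + pauli p 1 1 * pauli p 1 0 * (a 0 0 * (starRingEnd ℂ) (a 1 0) + a 0 1 * (starRingEnd ℂ) (a 1 1)) * e11 + pauli p 1 1 * pauli p 1 0 * e01 + pauli p 1 1 * pauli p 1 1 * (a 1 0 * (starRingEnd ℂ) (a 1 0) + a 1 1 * (starRingEnd ℂ) (a 1 1)) * e11 + pauli p 1 1 * pauli p 1 1 * e11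

lemma ker_tr1 (μ : Measure UG) [IsProbabilityMeasure μ] (p : Fin 4) :
    ∑ z, ∑ z', ker μ p z z z' z' = (pauli p 0 0 + pauli p 1 1) ^ 2 := by
  unfold ker
  have h1 : ∑ z : Fin 2, ∑ z' : Fin 2, ∫ u : UG,
      Mfun p (u : M2) z z * Mfun p (u : M2) z' z' ∂μ =
      ∫ u : UG, ∑ z : Fin 2, ∑ z' : Fin 2, Mfun p (u : M2) z z * Mfun p (u : M2) z' z' ∂μ := by
    rw [integral_finset_sum _ (fun z _ => integrable_finset_sum _
      (fun z' _ => integrable_kerterm μ p z z z' z'))]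
    exact Finset.sum_congr rfl (fun z _ => (integral_finset_sum _
      (fun z' _ => integrable_kerterm μ p z z z' z')).symm)
  rw [h1]
  have h2 : ∀ u : UG, ∑ z : Fin 2, ∑ z' : Fin 2, Mfun p (u : M2) z z * Mfun p (u : M2) z' z' =
      (pauli p 0 0 + pauli p 1 1) ^ 2 := by
    intro u
    have hd := sum_diag_eq p (u : M2) (Matrix.mem_unitaryGroup_iff.mp u.2)
    simp only [Fin.sum_univ_two] at hd ⊢
    linear_combination (Mfun p (u : M2) 0 0 + Mfun p (u : M2) 1 1 +
      pauli p 0 0 + pauli p 1 1) * hd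
  simp only [h2]
  simp

lemma ker_tr2 (μ : Measure UG) [IsProbabilityMeasure μ] (p : Fin 4) :
    ∑ z, ∑ z', ker μ p z z' z' z =
      pauli p 0 0 * pauli p 0 0 + pauli p 0 1 * pauli p 1 0 +
      pauli p 1 0 * pauli p 0 1 + pauli p 1 1 * pauli p 1 1 := by
  unfold ker
  have h1 : ∑ z : Fin 2, ∑ z' : Fin 2, ∫ u : UG,
      Mfun p (u : M2) z z' * Mfun p (u : M2) z' z ∂μ =
      ∫ u : UG, ∑ z : Fin 2, ∑ z' : Fin 2, Mfun p (u : M2) z z' * Mfun p (u : M2) z' z ∂μ := by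
    rw [integral_finset_sum _ (fun z _ => integrable_finset_sum _
      (fun z' _ => integrable_kerterm μ p z z' z' z))]
    exact Finset.sum_congr rfl (fun z _ => (integral_finset_sum _
      (fun z' _ => integrable_kerterm μ p z z' z' z)).symm)
  rw [h1]
  have h2 : ∀ u : UG, ∑ z : Fin 2, ∑ z' : Fin 2, Mfun p (u : M2) z z' * Mfun p (u : M2) z' z =
      pauli p 0 0 * pauli p 0 0 + pauli p 0 1 * pauli p 1 0 +
      pauli p 1 0 * pauli p 0 1 + pauli p 1 1 * pauli p 1 1 :=
    fun u => sum_cross_eq p (u : M2) (Matrix.mem_unitaryGroup_iff.mp u.2)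
  simp only [h2]
  simp

lemma Mfun_id (u : UG) (z w : Fin 2) : Mfun 0 (u : M2) z w = if w = z then 1 else 0 := by
  have h2 : (star (u : M2) * (u : M2)) w z = (1 : M2) w z := by
    rw [Matrix.mem_unitaryGroup_iff'.mp u.2]
  simp only [Matrix.mul_apply, Fin.sum_univ_two, Matrix.star_apply, Matrix.one_apply,
    RCLike.star_def] at h2
  simp only [Mfun, Fin.sum_univ_two, pauli, Matrix.one_apply]
  norm_num
  linear_combination h2

lemma ker_id (μ : Measure UG) [IsProbabilityMeasure μ] (z w z' w' : Fin 2) :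
    ker μ 0 z w z' w' = (if w = z then (1:ℂ) else 0) * (if w' = z' then (1:ℂ) else 0) := by
  unfold ker
  simp only [Mfun_id]
  simp

noncomputable def VX : UG := ⟨!![0, 1; 1, 0], by
  constructor <;>
  · ext i j
    fin_cases i <;> fin_cases j <;>
      simp [Matrix.mul_apply, Fin.sum_univ_two, Matrix.star_apply, Matrix.one_apply]⟩

noncomputable def VZ : UG := ⟨!![1, 0; 0, -1], by
  constructor <;>
  · ext i j
    fin_cases i <;> fin_cases j <;>
      simp [Matrix.mul_apply, Fin.sum_univ_two, Matrix.star_apply, Matrix.one_apply]⟩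

noncomputable def VS : UG := ⟨!![1, 0; 0, Complex.I], by
  constructor <;>
  · ext i j
    fin_cases i <;> fin_cases j <;>
      simp [Matrix.mul_apply, Fin.sum_univ_two, Matrix.star_apply, Matrix.one_apply,
        Complex.conj_I, Complex.I_mul_I]⟩

noncomputable def VR : UG := ⟨!![3/5, -4/5; 4/5, 3/5], by
  constructor <;>
  · ext i j
    fin_cases i <;> fin_cases j <;>
    · simp [Matrix.mul_apply, Fin.sum_univ_two, Matrix.star_apply, Matrix.one_apply,
        map_div₀, map_ofNat, map_neg]
      try norm_num⟩

example : True := trivial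

lemma ker_eq_ne (μ : Measure UG) [IsProbabilityMeasure μ]
    (hR : ∀ V : UG, MeasurePreserving (fun u : UG => u * V) μ μ)
    (p : Fin 4) (hp : p ≠ 0) (z w z' w' : Fin 2) :
    ker μ p z w z' w' = 3⁻¹ * (pauli 1 w z * pauli 1 w' z' +
      pauli 2 w z * pauli 2 w' z' + pauli 3 w z * pauli 3 w' z') := by
  -- zero facts from VZ
  have hz1 : ker μ p 0 0 0 1 = 0 := by
    have h := ker_inv p VZ (hR VZ) 0 0 0 1
    simp [VZ, Fin.sum_univ_two] at h; linear_combination h / 2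
  have hz2 : ker μ p 0 0 1 0 = 0 := by
    have h := ker_inv p VZ (hR VZ) 0 0 1 0
    simp [VZ, Fin.sum_univ_two] at h; linear_combination h / 2
  have hz3 : ker μ p 0 1 0 0 = 0 := by
    have h := ker_inv p VZ (hR VZ) 0 1 0 0
    simp [VZ, Fin.sum_univ_two] at h; linear_combination h / 2
  have hz4 : ker μ p 1 0 0 0 = 0 := by
    have h := ker_inv p VZ (hR VZ) 1 0 0 0
    simp [VZ, Fin.sum_univ_two] at h; linear_combination h / 2
  have hz5 : ker μ p 1 1 1 0 = 0 := by
    have h := ker_inv p VZ (hR VZ) 1 1 1 0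
    simp [VZ, Fin.sum_univ_two] at h; linear_combination h / 2
  have hz6 : ker μ p 1 1 0 1 = 0 := by
    have h := ker_inv p VZ (hR VZ) 1 1 0 1
    simp [VZ, Fin.sum_univ_two] at h; linear_combination h / 2
  have hz7 : ker μ p 1 0 1 1 = 0 := by
    have h := ker_inv p VZ (hR VZ) 1 0 1 1
    simp [VZ, Fin.sum_univ_two] at h; linear_combination h / 2
  have hz8 : ker μ p 0 1 1 1 = 0 := by
    have h := ker_inv p VZ (hR VZ) 0 1 1 1
    simp [VZ, Fin.sum_univ_two] at h; linear_combination h / 2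
  -- zero facts from VS
  have hs1 : ker μ p 0 1 0 1 = 0 := by
    have h := ker_inv p VS (hR VS) 0 1 0 1
    simp [VS, Fin.sum_univ_two, Complex.conj_I] at h; linear_combination h / 2
  have hs2 : ker μ p 1 0 1 0 = 0 := by
    have h := ker_inv p VS (hR VS) 1 0 1 0
    simp [VS, Fin.sum_univ_two, Complex.conj_I] at h; linear_combination h / 2
  -- flip facts from VX
  have he1 : ker μ p 0 0 0 0 = ker μ p 1 1 1 1 := by
    have h := ker_inv p VX (hR VX) 0 0 0 0
    simp [VX, Fin.sum_univ_two] at h; linear_combination h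
  have he2 : ker μ p 0 0 1 1 = ker μ p 1 1 0 0 := by
    have h := ker_inv p VX (hR VX) 0 0 1 1
    simp [VX, Fin.sum_univ_two] at h; linear_combination h
  have he3 : ker μ p 0 1 1 0 = ker μ p 1 0 0 1 := by
    have h := ker_inv p VX (hR VX) 0 1 1 0
    simp [VX, Fin.sum_univ_two] at h; linear_combination h
  -- rotation fact
  have heR := ker_inv p VR (hR VR) 0 0 0 0
  simp only [VR] at heR
  simp [Fin.sum_univ_two, map_div₀, map_ofNat, map_neg] at heR
  -- trace facts
  have hpa : (pauli p 0 0 + pauli p 1 1) ^ 2 = 0 := by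
    fin_cases p
    · exact absurd rfl hp
    all_goals norm_num [pauli]
  have hpb : pauli p 0 0 * pauli p 0 0 + pauli p 0 1 * pauli p 1 0 +
      pauli p 1 0 * pauli p 0 1 + pauli p 1 1 * pauli p 1 1 = 2 := by
    fin_cases p
    · exact absurd rfl hp
    all_goals norm_num [pauli, Complex.I_mul_I]
  have ht1 := ker_tr1 μ p
  rw [hpa] at ht1
  simp only [Fin.sum_univ_two] at ht1
  have ht2 := (ker_tr2 μ p).trans hpb
  simp only [Fin.sum_univ_two] at ht2
  -- solve
  have hA1 : ker μ p 0 0 0 0 = 3⁻¹ := by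
    linear_combination (625 * heR + 144 * ht1 + 144 * ht2 + 32 * he1 + 144 * (hs1 + hs2) +
      108 * (hz1 + hz2 + hz3 + hz4) + 192 * (hz5 + hz6 + hz7 + hz8)) / 864
  have hA2 : ker μ p 1 1 1 1 = 3⁻¹ := by linear_combination hA1 - he1
  have hG1 : ker μ p 0 0 1 1 = -3⁻¹ := by linear_combination (ht1 + he2 - hA1 - hA2) / 2
  have hG2 : ker μ p 1 1 0 0 = -3⁻¹ := by linear_combination hG1 - he2
  have hD1 : ker μ p 0 1 1 0 = 2/3 := by linear_combination (ht2 + he3 - hA1 - hA2) / 2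
  have hD2 : ker μ p 1 0 0 1 = 2/3 := by linear_combination hD1 - he3
  have hp1 : pauli 1 = !![0, 1; 1, 0] := rfl
  have hp2 : pauli 2 = !![0, -Complex.I; Complex.I, 0] := rfl
  have hp3 : pauli 3 = !![1, 0; 0, -1] := rfl
  fin_cases z <;> fin_cases w <;> fin_cases z' <;> fin_cases w' <;>
    norm_num [hp1, hp2, hp3, Complex.I_mul_I]
  · linear_combination hA1
  · linear_combination hz1
  · linear_combination hz2
  · linear_combination hG1
  · linear_combination hz3
  · linear_combination hs1
  · linear_combination hD1
  · linear_combination hz8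
  · linear_combination hz4
  · linear_combination hD2
  · linear_combination hs2
  · linear_combination hz7
  · linear_combination hG2
  · linear_combination hz6
  · linear_combination hz5
  · linear_combination hA2

lemma pi_integral_prod {n : ℕ} {X : Type} [MeasurableSpace X] (μ : Fin n → Measure X)
    [∀ i, IsProbabilityMeasure (μ i)] (f : Fin n → X → ℂ) :
    ∫ x : Fin n → X, ∏ i, f i (x i) ∂(Measure.pi μ) = ∏ i, ∫ x, f i x ∂(μ i) := by
  have := MeasureTheory.integral_fintype_prod_eq_prod (E := fun _ => X) f (μ := μ)
  exact this

lemma pi_integrable_prod {n : ℕ} {X : Type} [MeasurableSpace X] (μ : Fin n → Measure X)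
    [∀ i, IsProbabilityMeasure (μ i)] (f : Fin n → X → ℂ)
    (hf : ∀ i, Integrable (f i) (μ i)) :
    Integrable (fun x : Fin n → X => ∏ i, f i (x i)) (Measure.pi μ) := by
  have := MeasureTheory.Integrable.fintype_prod_dep (E := fun _ => X) (f := f) (μ := μ) hf
  exact this

lemma sum_swap13 {A : Type*} [Fintype A] (f : A → A → A → ℂ) :
    ∑ a, ∑ b, ∑ c, f a b c = ∑ c, ∑ b, ∑ a, f a b c := by
  calc ∑ a, ∑ b, ∑ c, f a b c = ∑ a, ∑ c, ∑ b, f a b c :=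
        Finset.sum_congr rfl fun a _ => Finset.sum_comm
    _ = ∑ c, ∑ a, ∑ b, f a b c := Finset.sum_comm
    _ = ∑ c, ∑ b, ∑ a, f a b c := Finset.sum_congr rfl fun c _ => Finset.sum_comm

lemma trace_expand {n : ℕ} (s : Fin n → Fin 4) (u : Fin n → UG)
    (B : Matrix (Fin n → Fin 2) (Fin n → Fin 2) ℂ) :
    Matrix.trace (pauliString s * tensorLayer (fun i => ((u i : M2))) * B *
      tensorLayer (fun i => star ((u i : M2)))) =
    ∑ z : Fin n → Fin 2, ∑ w : Fin n → Fin 2,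
      (∏ i, Mfun (s i) ((u i : M2)) (z i) (w i)) * B z w := by
  have hM : ∀ z w : Fin n → Fin 2, (∏ i, Mfun (s i) ((u i : M2)) (z i) (w i)) =
      ∑ x : Fin n → Fin 2, ∑ y : Fin n → Fin 2,
        ∏ i, (pauli (s i) (x i) (y i) * (u i : M2) (y i) (z i) * conj ((u i : M2) (x i) (w i))) := by
    intro z w
    simp only [Mfun, Finset.prod_univ_sum, Fintype.piFinset_univ]
  simp only [hM]
  simp only [Matrix.trace, Matrix.diag, Matrix.mul_apply, pauliString, tensorLayer,
    Matrix.of_apply, Matrix.star_apply, RCLike.star_def, Finset.sum_mul]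
  rw [sum_swap13 (fun z w x => ∑ y : Fin n → Fin 2,
    (∏ i, pauli (s i) (x i) (y i) * (u i : M2) (y i) (z i) * conj ((u i : M2) (x i) (w i))) * B z w)]
  refine Finset.sum_congr rfl fun x _ => Finset.sum_congr rfl fun w _ =>
    Finset.sum_congr rfl fun z _ => Finset.sum_congr rfl fun y _ => ?_
  rw [Finset.prod_mul_distrib, Finset.prod_mul_distrib]
  ring

def Qp (p : Fin 4) : Finset (Fin 4) := if p = 0 then {0} else {1, 2, 3}

noncomputable def kap (p : Fin 4) (z w z' w' : Fin 2) : ℂ :=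
  (if p = 0 then 1 else 3⁻¹) * ∑ r ∈ Qp p, pauli r w z * pauli r w' z'

lemma ker_eq (μ : Measure UG) [IsProbabilityMeasure μ]
    (hR : ∀ V : UG, MeasurePreserving (fun u : UG => u * V) μ μ)
    (p : Fin 4) (z w z' w' : Fin 2) :
    ker μ p z w z' w' = kap p z w z' w' := by
  by_cases hp : p = 0
  · subst hp
    rw [ker_id]
    simp [kap, Qp, pauli, Matrix.one_apply]
  · rw [ker_eq_ne μ hR p hp]
    simp only [kap, Qp, if_neg hp]
    rw [show ({1, 2, 3} : Finset (Fin 4)) = insert 1 (insert 2 {3}) from rfl]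
    rw [Finset.sum_insert (by decide), Finset.sum_insert (by decide), Finset.sum_singleton]
    ring

lemma sum_comm5 {A Q : Type*} [Fintype A] (t : Finset Q) (f : Q → A → A → A → A → ℂ) :
    ∑ q ∈ t, ∑ a, ∑ b, ∑ c, ∑ d, f q a b c d =
    ∑ a, ∑ b, ∑ c, ∑ d, ∑ q ∈ t, f q a b c d := by
  rw [Finset.sum_comm]
  refine Finset.sum_congr rfl fun a _ => ?_
  rw [Finset.sum_comm]
  refine Finset.sum_congr rfl fun b _ => ?_
  rw [Finset.sum_comm]
  refine Finset.sum_congr rfl fun c _ => ?_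
  exact Finset.sum_comm

lemma sum_swap_pairs {A : Type*} [Fintype A] (f : A → A → A → A → ℂ) :
    ∑ a, ∑ b, ∑ c, ∑ d, f a b c d = ∑ b, ∑ a, ∑ d, ∑ c, f a b c d := by
  rw [Finset.sum_comm]
  exact Finset.sum_congr rfl fun b _ => Finset.sum_congr rfl fun a _ => Finset.sum_comm

lemma hc_lemma {n : ℕ} (s : Fin n → Fin 4) :
    ((3 : ℂ) ^ (pauliSupp s).card)⁻¹ = ∏ i, (if s i = 0 then (1:ℂ) else 3⁻¹) := by
  rw [Finset.prod_ite]
  simp only [Finset.prod_const, one_pow, mul_one, pauliSupp]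
  rw [← inv_pow, one_mul]

lemma hfilter_lemma {n : ℕ} (s : Fin n → Fin 4) :
    Finset.filter (fun q : Fin n → Fin 4 => pauliSupp q = pauliSupp s) Finset.univ =
      Fintype.piFinset fun i => Qp (s i) := by
  have h4 : ∀ a : Fin 4, (a ∈ ({1, 2, 3} : Finset (Fin 4))) ↔ a ≠ 0 := by decide
  ext q
  have key : pauliSupp q = pauliSupp s ↔ ∀ i, (q i ≠ 0 ↔ s i ≠ 0) := by
    rw [Finset.ext_iff]
    apply forall_congr'
    intro i
    simp [pauliSupp]
  simp only [Finset.mem_filter, Finset.mem_univ, true_and, Fintype.mem_piFinset, key]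
  apply forall_congr'
  intro i
  by_cases hs : s i = 0
  · simp [Qp, hs]
  · simp [Qp, hs, h4]

/-- for a layer of independent single-qubit Haar-random (2-design) gates
and an `n`-qubit Pauli string `P`,
`E_U[Tr(P U B U†)²] = 3^{−|P|} Σ_{Q : supp Q = supp P} Tr(Q B)²`. -/
theorem pauli_second_moment (n : ℕ)
    (ν : Fin n → Measure (Matrix.unitaryGroup (Fin 2) ℂ))
    [∀ i, IsProbabilityMeasure (ν i)]
    (hleft : ∀ i (V : Matrix.unitaryGroup (Fin 2) ℂ),
      MeasurePreserving (fun u => V * u) (ν i) (ν i))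
    (hright : ∀ i (V : Matrix.unitaryGroup (Fin 2) ℂ),
      MeasurePreserving (fun u => u * V) (ν i) (ν i))
    (B : Matrix (Fin n → Fin 2) (Fin n → Fin 2) ℂ)
    (s : Fin n → Fin 4) :
    (∫ u : Fin n → Matrix.unitaryGroup (Fin 2) ℂ,
        (Matrix.trace (pauliString s *
          tensorLayer (fun i => (u i : Matrix (Fin 2) (Fin 2) ℂ)) * B *
          tensorLayer (fun i => star ((u i : Matrix (Fin 2) (Fin 2) ℂ))))) ^ 2
        ∂(Measure.pi ν)) =
      ((3 : ℂ) ^ (pauliSupp s).card)⁻¹ *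
        ∑ q ∈ Finset.univ.filter (fun q : Fin n → Fin 4 => pauliSupp q = pauliSupp s),
          (Matrix.trace (pauliString q * B)) ^ 2 := by
  classical
  -- Step 1: pointwise expansion of the squared trace
  have hint : ∀ u : Fin n → UG,
      (Matrix.trace (pauliString s * tensorLayer (fun i => ((u i : M2))) * B *
        tensorLayer (fun i => star ((u i : M2))))) ^ 2 =
      ∑ z : Fin n → Fin 2, ∑ w : Fin n → Fin 2, ∑ z' : Fin n → Fin 2, ∑ w' : Fin n → Fin 2,
        (∏ i, (Mfun (s i) ((u i : M2)) (z i) (w i) * Mfun (s i) ((u i : M2)) (z' i) (w' i))) *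
          (B z w * B z' w') := by
    intro u
    rw [pow_two, trace_expand]
    simp only [Finset.sum_mul, Finset.mul_sum]
    refine Finset.sum_congr rfl fun z _ => Finset.sum_congr rfl fun w _ =>
      Finset.sum_congr rfl fun z' _ => Finset.sum_congr rfl fun w' _ => ?_
    rw [Finset.prod_mul_distrib]
    ring
  simp only [hint]
  -- Step 2: Fubini
  have hInt : ∀ (z w z' w' : Fin n → Fin 2), Integrable (fun u : Fin n → UG =>
      (∏ i, (Mfun (s i) ((u i : M2)) (z i) (w i) * Mfun (s i) ((u i : M2)) (z' i) (w' i))) *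
        (B z w * B z' w')) (Measure.pi ν) := by
    intro z w z' w'
    exact (pi_integrable_prod ν _
      (fun i => integrable_kerterm (ν i) (s i) (z i) (w i) (z' i) (w' i))).mul_const _
  have step : ∀ z w z' w' : Fin n → Fin 2,
      (∫ u : Fin n → UG, (∏ i, (Mfun (s i) ((u i : M2)) (z i) (w i) *
        Mfun (s i) ((u i : M2)) (z' i) (w' i))) * (B z w * B z' w') ∂(Measure.pi ν)) =
      (∏ i, kap (s i) (z i) (w i) (z' i) (w' i)) * (B z w * B z' w') := by
    intro z w z' w'
    rw [integral_mul_const]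
    congr 1
    rw [pi_integral_prod ν (fun i v => Mfun (s i) ((v : M2)) (z i) (w i) *
      Mfun (s i) ((v : M2)) (z' i) (w' i))]
    exact Finset.prod_congr rfl fun i _ => ker_eq (ν i) (hright i) (s i) _ _ _ _
  calc (∫ u : Fin n → UG, ∑ z : Fin n → Fin 2, ∑ w : Fin n → Fin 2, ∑ z' : Fin n → Fin 2,
        ∑ w' : Fin n → Fin 2,
        (∏ i, (Mfun (s i) ((u i : M2)) (z i) (w i) * Mfun (s i) ((u i : M2)) (z' i) (w' i))) *
          (B z w * B z' w') ∂(Measure.pi ν))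
      = ∑ z : Fin n → Fin 2, ∑ w : Fin n → Fin 2, ∑ z' : Fin n → Fin 2, ∑ w' : Fin n → Fin 2,
        (∏ i, kap (s i) (z i) (w i) (z' i) (w' i)) * (B z w * B z' w') := by
        rw [integral_finset_sum _ (fun z _ => integrable_finset_sum _ (fun w _ =>
          integrable_finset_sum _ (fun z' _ => integrable_finset_sum _
            (fun w' _ => hInt z w z' w'))))]
        refine Finset.sum_congr rfl fun z _ => ?_
        rw [integral_finset_sum _ (fun w _ => integrable_finset_sum _ (fun z' _ =>
          integrable_finset_sum _ (fun w' _ => hInt z w z' w')))]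
        refine Finset.sum_congr rfl fun w _ => ?_
        rw [integral_finset_sum _ (fun z' _ => integrable_finset_sum _
          (fun w' _ => hInt z w z' w'))]
        refine Finset.sum_congr rfl fun z' _ => ?_
        rw [integral_finset_sum _ (fun w' _ => hInt z w z' w')]
        exact Finset.sum_congr rfl fun w' _ => step z w z' w'
    _ = ((3 : ℂ) ^ (pauliSupp s).card)⁻¹ *
        ∑ q ∈ Finset.univ.filter (fun q : Fin n → Fin 4 => pauliSupp q = pauliSupp s),
          (Matrix.trace (pauliString q * B)) ^ 2 := by
        -- expand the right-hand side
        have hTr : ∀ q : Fin n → Fin 4, Matrix.trace (pauliString q * B) =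
            ∑ w : Fin n → Fin 2, ∑ z : Fin n → Fin 2,
              (∏ i, pauli (q i) (w i) (z i)) * B z w := by
          intro q
          simp only [Matrix.trace, Matrix.diag, Matrix.mul_apply, pauliString, Matrix.of_apply]
        have hTr2 : ∀ q : Fin n → Fin 4, (Matrix.trace (pauliString q * B)) ^ 2 =
            ∑ w : Fin n → Fin 2, ∑ z : Fin n → Fin 2, ∑ w' : Fin n → Fin 2, ∑ z' : Fin n → Fin 2,
              (∏ i, (pauli (q i) (w i) (z i) * pauli (q i) (w' i) (z' i))) *
                (B z w * B z' w') := by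
          intro q
          rw [pow_two, hTr]
          simp only [Finset.sum_mul, Finset.mul_sum]
          refine Finset.sum_congr rfl fun w _ => Finset.sum_congr rfl fun z _ =>
            Finset.sum_congr rfl fun w' _ => Finset.sum_congr rfl fun z' _ => ?_
          rw [Finset.prod_mul_distrib]
          ring
        rw [hfilter_lemma, hc_lemma]
        simp only [hTr2]
        simp only [Finset.mul_sum]
        rw [sum_comm5]
        rw [sum_swap_pairs (fun w z w' z' => ∑ q ∈ Fintype.piFinset fun i => Qp (s i),
          (∏ i, (if s i = 0 then (1:ℂ) else 3⁻¹)) *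
            ((∏ i, (pauli (q i) (w i) (z i) * pauli (q i) (w' i) (z' i))) * (B z w * B z' w')))]
        refine Finset.sum_congr rfl fun z _ => Finset.sum_congr rfl fun w _ =>
          Finset.sum_congr rfl fun z' _ => Finset.sum_congr rfl fun w' _ => ?_
        -- pointwise: product of kap versus sum over q
        have hkap : (∏ i, kap (s i) (z i) (w i) (z' i) (w' i)) =
            (∏ i, (if s i = 0 then (1:ℂ) else 3⁻¹)) *
            ∑ q ∈ Fintype.piFinset fun i => Qp (s i),
              ∏ i, (pauli (q i) (w i) (z i) * pauli (q i) (w' i) (z' i)) := by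
          unfold kap
          rw [Finset.prod_mul_distrib]
          congr 1
          rw [Finset.prod_univ_sum]
        rw [hkap, Finset.mul_sum, Finset.sum_mul]
        exact Finset.sum_congr rfl fun q _ => by ring
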